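/- Let H_1 be the subgroup of GL(7,ℝ) generated by {exp(X) : X ∈ span_ℝ(λ_1, λ_2, λ_3)} and H_2 the subgroup generated by {exp(X) : X ∈ span_ℝ(λ_8, λ_9, λ_10)}. Then H_1 and H_2 commute elementwise: for all x ∈ H_1 and y ∈ H_2, x·y = y·x. -/

import Mathlib

/-!
The exceptional group `G₂` realized in `GL(7,ℝ)`, via the generators of its Lie
algebra of derivations of the octonions (following Cacciatori et al.).
Indices here are 0-based: the matrix unit `E a b` below corresponds to
`E_{(a+1)(b+1)}` in the 1-based notation of the paper.
-/

open Matrix Real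

noncomputable section

/-- The matrix unit `E a b` (0-based indices). -/
def E (a b : Fin 7) : Matrix (Fin 7) (Fin 7) ℝ :=
  Matrix.single a b 1

/-- `λ₁ = E₆₅ − E₅₆ + E₇₄ − E₄₇` (1-based). -/
def l1 : Matrix (Fin 7) (Fin 7) ℝ := E 5 4 - E 4 5 + E 6 3 - E 3 6
/-- `λ₂ = E₄₆ − E₆₄ + E₇₅ − E₅₇` (1-based). -/
def l2 : Matrix (Fin 7) (Fin 7) ℝ := E 3 5 - E 5 3 + E 6 4 - E 4 6
/-- `λ₃ = E₅₄ − E₄₅ + E₇₆ − E₆₇` (1-based). -/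
def l3 : Matrix (Fin 7) (Fin 7) ℝ := E 4 3 - E 3 4 + E 6 5 - E 5 6
/-- `λ₄ = E₂₇ − E₇₂ + E₃₆ − E₆₃` (1-based). -/
def l4 : Matrix (Fin 7) (Fin 7) ℝ := E 1 6 - E 6 1 + E 2 5 - E 5 2
/-- `λ₅ = E₆₂ − E₂₆ + E₃₇ − E₇₃` (1-based). -/
def l5 : Matrix (Fin 7) (Fin 7) ℝ := E 5 1 - E 1 5 + E 2 6 - E 6 2
/-- `λ₆ = E₂₅ − E₅₂ + E₄₃ − E₃₄` (1-based). -/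
def l6 : Matrix (Fin 7) (Fin 7) ℝ := E 1 4 - E 4 1 + E 3 2 - E 2 3
/-- `λ₇ = E₄₂ − E₂₄ + E₅₃ − E₃₅` (1-based). -/
def l7 : Matrix (Fin 7) (Fin 7) ℝ := E 3 1 - E 1 3 + E 4 2 - E 2 4
/-- `λ₈ = 2(E₃₂ − E₂₃) + E₄₅ − E₅₄ + E₇₆ − E₆₇` (1-based). -/
def l8 : Matrix (Fin 7) (Fin 7) ℝ :=
  (2 : ℝ) • (E 2 1 - E 1 2) + E 3 4 - E 4 3 + E 6 5 - E 5 6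
/-- `λ₉ = 2(E₂₁ − E₁₂) + E₄₇ − E₇₄ + E₆₅ − E₅₆` (1-based). -/
def l9 : Matrix (Fin 7) (Fin 7) ℝ :=
  (2 : ℝ) • (E 1 0 - E 0 1) + E 3 6 - E 6 3 + E 5 4 - E 4 5
/-- `λ₁₀ = 2(E₃₁ − E₁₃) + E₆₄ − E₄₆ + E₇₅ − E₅₇` (1-based). -/
def l10 : Matrix (Fin 7) (Fin 7) ℝ :=
  (2 : ℝ) • (E 2 0 - E 0 2) + E 5 3 - E 3 5 + E 6 4 - E 4 6
/-- `λ₁₁ = 2(E₄₁ − E₁₄) + E₃₆ − E₆₃ + E₇₂ − E₂₇` (1-based). -/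
def l11 : Matrix (Fin 7) (Fin 7) ℝ :=
  (2 : ℝ) • (E 3 0 - E 0 3) + E 2 5 - E 5 2 + E 6 1 - E 1 6
/-- `λ₁₂ = 2(E₅₁ − E₁₅) + E₂₆ − E₆₂ + E₃₇ − E₇₃` (1-based). -/
def l12 : Matrix (Fin 7) (Fin 7) ℝ :=
  (2 : ℝ) • (E 4 0 - E 0 4) + E 1 5 - E 5 1 + E 2 6 - E 6 2
/-- `λ₁₃ = 2(E₆₁ − E₁₆) + E₄₃ − E₃₄ + E₅₂ − E₂₅` (1-based). -/
def l13 : Matrix (Fin 7) (Fin 7) ℝ :=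
  (2 : ℝ) • (E 5 0 - E 0 5) + E 3 2 - E 2 3 + E 4 1 - E 1 4
/-- `λ₁₄ = 2(E₇₁ − E₁₇) + E₂₄ − E₄₂ + E₅₃ − E₃₅` (1-based). -/
def l14 : Matrix (Fin 7) (Fin 7) ℝ :=
  (2 : ℝ) • (E 6 0 - E 0 6) + E 1 3 - E 3 1 + E 4 2 - E 2 4

/-- The subgroup of `GL(7,ℝ)` generated by the exponentials of a spanning set `S`
of Lie algebra elements, realized as a submonoid of the matrix ring (this is
legitimate since the generating set `{exp X : X ∈ span S}` is closed under
inverses, `exp(X)⁻¹ = exp(−X)`). -/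
def expClosure (S : Set (Matrix (Fin 7) (Fin 7) ℝ)) :
    Submonoid (Matrix (Fin 7) (Fin 7) ℝ) :=
  Submonoid.closure {M | ∃ X ∈ Submodule.span ℝ S, M = NormedSpace.exp X}

/-
All six matrices are block diagonal for `ℝ⁷ = span(e₁, e₂, e₃) ⊕ span(e₄, …, e₇)`, and
`λ₁, λ₂, λ₃` vanish on the first block. On the second block `λ₁, λ₂, λ₃` are self-dual and
`λ₈, λ₉, λ₁₀` anti-self-dual elements of `so(4) ≅ so(3) ⊕ so(3)`, so they commute; hence so do
their spans, the exponentials of these (`Commute.exp`), and the monoids generated by those.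
-/

namespace Submonoid

variable {M : Type*} [Monoid M] {S T : Set M} {x y : M}

theorem commute_of_mem_closure_left (h : ∀ a ∈ S, Commute a y) (hx : x ∈ closure S) :
    Commute x y :=
  closure_induction h (Commute.one_left y) (fun _ _ _ _ => Commute.mul_left) hx

theorem commute_of_mem_closure (h : ∀ a ∈ S, ∀ b ∈ T, Commute a b) (hx : x ∈ closure S)
    (hy : y ∈ closure T) : Commute x y :=
  commute_of_mem_closure_left
    (fun a ha => (commute_of_mem_closure_left (fun b hb => (h a ha b hb).symm) hy).symm) hx

end Submonoid

namespace Submodule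

variable {R A : Type*} [Semiring R] [Semiring A] [Module R A] [SMulCommClass R A A]
  [IsScalarTower R A A] {S T : Set A} {x y : A}

theorem commute_of_mem_span_left (h : ∀ a ∈ S, Commute a y) (hx : x ∈ span R S) :
    Commute x y :=
  span_induction h (Commute.zero_left y) (fun _ _ _ _ => Commute.add_left)
    (fun c _ _ hc => hc.smul_left c) hx

theorem commute_of_mem_span (h : ∀ a ∈ S, ∀ b ∈ T, Commute a b) (hx : x ∈ span R S)
    (hy : y ∈ span R T) : Commute x y :=
  commute_of_mem_span_left
    (fun a ha => (commute_of_mem_span_left (fun b hb => (h a ha b hb).symm) hy).symm) hx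

end Submodule

theorem commute_l123_l8910 :
    ∀ A ∈ ({l1, l2, l3} : Set (Matrix (Fin 7) (Fin 7) ℝ)),
      ∀ B ∈ ({l8, l9, l10} : Set (Matrix (Fin 7) (Fin 7) ℝ)), Commute A B := by
  rintro A (rfl | rfl | rfl) B (rfl | rfl | rfl) <;>
  · simp only [Commute, SemiconjBy, l1, l2, l3, l8, l9, l10, E, add_mul, mul_add, sub_mul,
      mul_sub, smul_mul_assoc, mul_smul_comm, single_mul_single_same, one_mul]
    simp (disch := decide) only [single_mul_single_of_ne]
    module

/-- **`H₁` and `H₂` commute elementwise**: for all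
`x ∈ H₁ = ⟨exp(span{λ₁,λ₂,λ₃})⟩` and `y ∈ H₂ = ⟨exp(span{λ₈,λ₉,λ₁₀})⟩`, `x·y = y·x`. -/
theorem H1_H2_commute (x y : Matrix (Fin 7) (Fin 7) ℝ)
    (hx : x ∈ expClosure {l1, l2, l3}) (hy : y ∈ expClosure {l8, l9, l10}) :
    x * y = y * x := by
  refine Submonoid.commute_of_mem_closure ?_ hx hy
  rintro _ ⟨X, hX, rfl⟩ _ ⟨Y, hY, rfl⟩
  exact (Submodule.commute_of_mem_span commute_l123_l8910 hX hY).exp
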